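/- Let G be a ℤ-invariant valued abelian group which is maximal. Then for every g ∈ G and every m ∈ ℕ the set Δ_m(g) = {v(g − m·g') : g' ∈ G} admits a maximum; equivalently, the extension G/mG of valued abelian groups is pseudo-complete. -/

import Mathlib

universe u

/-- `v : G → Γ` is a valuation making the abelian group `G` a valued abelian group:
`Γ` is a linear order with greatest element `⊤` (denoted `∞` in the paper), `v` is
surjective, `v g = ⊤` iff `g = 0`, and `v (g - h) ≥ min (v g) (v h)`. -/
structure IsValuedGroup {G Γ : Type*} [AddCommGroup G] [LinearOrder Γ] [OrderTop Γ]
    (v : G → Γ) : Prop where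
  surjective : Function.Surjective v
  eq_top_iff : ∀ g : G, v g = ⊤ ↔ g = 0
  min_le_sub : ∀ g h : G, min (v g) (v h) ≤ v (g - h)

/-- A sequence `a` indexed by a linearly ordered set `I` is pseudo-Cauchy if eventually
`v (a i - a j) < v (a j - a k)` for `i < j < k`. -/
def IsPseudoCauchy {G Γ I : Type*} [AddCommGroup G] [LinearOrder Γ] [LinearOrder I]
    (v : G → Γ) (a : I → G) : Prop :=
  ∃ i₀ : I, ∀ i j k : I, i₀ ≤ i → i < j → j < k → v (a i - a j) < v (a j - a k)

/-- `x` is a pseudo-limit of the sequence `a` if eventually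
`v (a i - x) = v (a i - a j)` for `i < j`. -/
def IsPseudoLimit {G Γ I : Type*} [AddCommGroup G] [LinearOrder Γ] [LinearOrder I]
    (v : G → Γ) (a : I → G) (x : G) : Prop :=
  ∃ i₀ : I, ∀ i j : I, i₀ ≤ i → i < j → v (a i - x) = v (a i - a j)

/-- For subsets `G ⊆ K` of an ambient valued abelian group `(H, v)`, `K` is an immediate
extension of `G` (both regarded as valued groups via restriction of `v`): the nonzero
values of `K` and of `G` coincide, and for every value `γ` of `G` and every `k ∈ K` with
`v k ≥ γ` there is `g ∈ G` with `v g ≥ γ` and `v (k - g) > γ` (i.e. the inclusion induces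
isomorphisms of ribs). -/
def IsImmediateIn {H Γ : Type*} [AddCommGroup H] [LinearOrder Γ] [OrderTop Γ]
    (v : H → Γ) (G K : Set H) : Prop :=
  (∀ k ∈ K, k ≠ 0 → ∃ g ∈ G, g ≠ 0 ∧ v g = v k) ∧
  (∀ γ : Γ, (∃ g ∈ G, g ≠ 0 ∧ v g = γ) →
    ∀ k ∈ K, γ ≤ v k → ∃ g ∈ G, γ ≤ v g ∧ γ < v (k - g))

/-- Relative pseudo-completeness: every pseudo-Cauchy sequence with entries in `G` which
has a pseudo-limit in `K` already has a pseudo-limit in `G` (all inside the ambient valued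
abelian group `(H, v)`). -/
def IsPseudoCompleteIn {H Γ : Type u} [AddCommGroup H] [LinearOrder Γ]
    (v : H → Γ) (G K : Set H) : Prop :=
  ∀ (I : Type u) [LinearOrder I] [WellFoundedLT I] [NoMaxOrder I] [Nonempty I]
    (a : I → H), (∀ i, a i ∈ G) → IsPseudoCauchy v a →
    (∃ x ∈ K, IsPseudoLimit v a x) → ∃ x ∈ G, IsPseudoLimit v a x

/-- A valued abelian group is pseudo-complete if every pseudo-Cauchy sequence in it
admits a pseudo-limit in it. -/
def IsPseudoComplete {G Γ : Type u} [AddCommGroup G] [LinearOrder Γ] (v : G → Γ) : Prop :=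
  ∀ (I : Type u) [LinearOrder I] [WellFoundedLT I] [NoMaxOrder I] [Nonempty I]
    (a : I → G), IsPseudoCauchy v a → ∃ x : G, IsPseudoLimit v a x

/-- The extension `H/G` is maximal: there is no subgroup `K` with `G ⊊ K ⊆ H` such that
`K/G` is immediate. -/
def IsMaximalIn {H Γ : Type u} [AddCommGroup H] [LinearOrder Γ] [OrderTop Γ]
    (v : H → Γ) (G : AddSubgroup H) : Prop :=
  ∀ K : AddSubgroup H, G < K → ¬ IsImmediateIn v (G : Set H) (K : Set H)

/-- A valued abelian group `(G, v)` is maximal if it admits no proper immediate extension: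
whenever `(H, w)` is a valued abelian group (with the same value set, as immediate extensions
preserve the skeleton) and `f : G →+ H` is an injective valuation-preserving homomorphism
making `H` an immediate extension of the image of `G`, then `f` is surjective. -/
def IsMaximal {G Γ : Type u} [AddCommGroup G] [LinearOrder Γ] [OrderTop Γ]
    (v : G → Γ) : Prop :=
  ∀ (H : Type u) (_ : AddCommGroup H) (w : H → Γ), IsValuedGroup w →
    ∀ f : G →+ H, Function.Injective f → (∀ g : G, w (f g) = v g) →
      IsImmediateIn w (Set.range f) Set.univ → Function.Surjective f

/-!
If `Δ_m(g)` had no maximum, choose `s δ` with `v (g - m • s δ) = δ` for `δ ∈ Δ_m(g)`: by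
`ℤ`-invariance this is a pseudo-Cauchy family with `v (s δ - s ε) = δ` for `δ < ε`, and `m • s`
pseudo-converges to `g`. Let `d` be the least positive integer such that `d • s` has a pseudo-limit
`z₀`. Adjoin to `G` an element `t` with `d • t = z₀`, and value `x + n • t` (`0 ≤ n < d`) by the
eventual value of `v (x + n • s δ)`, which exists by minimality of `d`. This is an immediate
extension, proper unless `d = 1`; so by maximality `s` has a pseudo-limit `z`, and `v (g - m • z)`
exceeds every element of `Δ_m(g)`. Pseudo-completeness of `G/mG` follows, since a best
approximation in `mG` of a pseudo-limit is again a pseudo-limit.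
-/

open Filter

section ValuedGroup

variable {G Γ : Type*} [AddCommGroup G] [LinearOrder Γ] [OrderTop Γ] {v : G → Γ}

namespace IsValuedGroup

theorem map_zero (hv : IsValuedGroup v) : v 0 = ⊤ := (hv.eq_top_iff 0).2 rfl

theorem map_neg (hv : IsValuedGroup v) (x : G) : v (-x) = v x := by
  have key : ∀ y : G, v y ≤ v (-y) := fun y => by
    simpa [hv.map_zero] using hv.min_le_sub 0 y
  exact le_antisymm (by simpa using key (-x)) (key x)

theorem map_sub_comm (hv : IsValuedGroup v) (x y : G) : v (x - y) = v (y - x) := by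
  rw [← hv.map_neg, neg_sub]

theorem min_le_map_add (hv : IsValuedGroup v) (x y : G) : min (v x) (v y) ≤ v (x + y) := by
  simpa [hv.map_neg] using hv.min_le_sub x (-y)

theorem map_add_eq_of_lt (hv : IsValuedGroup v) {x y : G} (h : v x < v y) :
    v (x + y) = v x := by
  refine le_antisymm ?_ (by simpa [h.le] using hv.min_le_map_add x y)
  by_contra! hlt
  have hx : min (v (x + y)) (v y) ≤ v x := by simpa using hv.min_le_sub (x + y) y
  exact (lt_min hlt h).not_ge hx

theorem map_sub_eq_of_lt (hv : IsValuedGroup v) {x y : G} (h : v x < v y) :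
    v (x - y) = v x := by
  rw [sub_eq_add_neg]
  exact hv.map_add_eq_of_lt (by rwa [hv.map_neg])

end IsValuedGroup

def IsZInvariant (v : G → Γ) : Prop := ∀ (g : G) (n : ℕ), 0 < n → v (n • g) = v g

theorem IsZInvariant.map_zsmul (hinv : IsZInvariant v) (hv : IsValuedGroup v) {n : ℤ}
    (hn : n ≠ 0) (x : G) : v (n • x) = v x := by
  obtain ⟨k, rfl | rfl⟩ := Int.eq_nat_or_neg n
  · rw [natCast_zsmul]
    exact hinv x k (by omega)
  · rw [neg_smul, hv.map_neg, natCast_zsmul]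
    exact hinv x k (by omega)

theorem IsZInvariant.le_map_zsmul (hinv : IsZInvariant v) (hv : IsValuedGroup v) (n : ℤ)
    (x : G) : v x ≤ v (n • x) := by
  rcases eq_or_ne n 0 with rfl | hn
  · rw [zero_smul, hv.map_zero]
    exact le_top
  · rw [hinv.map_zsmul hv hn]

end ValuedGroup

section PseudoCauchy

variable {G Γ ι : Type*} [AddCommGroup G] [LinearOrder Γ] [OrderTop Γ] [LinearOrder ι]
  {v : G → Γ} {γ : ι → Γ} {s : ι → G}

/-- A pseudo-Cauchy family in normal form: `γ i` is Kaplansky's `γ_ρ`. -/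
structure IsPseudoCauchyWith (v : G → Γ) (γ : ι → Γ) (s : ι → G) : Prop where
  strictMono : StrictMono γ
  map_sub : ∀ i j, i < j → v (s i - s j) = γ i

def IsPseudoLimitWith (v : G → Γ) (γ : ι → Γ) (s : ι → G) (x : G) : Prop :=
  ∀ i, γ i ≤ v (s i - x)

theorem IsPseudoCauchyWith.zsmul (hs : IsPseudoCauchyWith v γ s) (hv : IsValuedGroup v)
    (hinv : IsZInvariant v) {n : ℤ} (hn : n ≠ 0) : IsPseudoCauchyWith v γ (n • s) :=
  ⟨hs.strictMono, fun i j hij => by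
    rw [Pi.smul_apply, Pi.smul_apply, ← smul_sub, hinv.map_zsmul hv hn, hs.map_sub i j hij]⟩

theorem IsPseudoCauchyWith.exists_eventually_map_sub_eq (hs : IsPseudoCauchyWith v γ s)
    (hv : IsValuedGroup v) {x : G} (hx : ¬ IsPseudoLimitWith v γ s x) :
    ∃ c, ∀ᶠ i in atTop, v (s i - x) = c ∧ c < γ i := by
  obtain ⟨i₀, hi₀⟩ : ∃ i₀, v (s i₀ - x) < γ i₀ := by simpa [IsPseudoLimitWith] using hx
  refine ⟨_, (eventually_ge_atTop i₀).mono fun i hi =>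
    ⟨?_, hi₀.trans_le (hs.strictMono.monotone hi)⟩⟩
  rcases eq_or_lt_of_le hi with rfl | hlt
  · rfl
  · rw [show s i - x = (s i₀ - x) - (s i₀ - s i) by abel,
      hv.map_sub_eq_of_lt (by rwa [hs.map_sub _ _ hlt])]

structure IsLeastPseudoLimitMultiple (v : G → Γ) (γ : ι → Γ) (s : ι → G) (z₀ : G) (d : ℕ) :
    Prop where
  isPseudoLimitWith : IsPseudoLimitWith v γ (d • s) z₀
  not_isPseudoLimitWith : ∀ n : ℕ, 0 < n → n < d → ∀ x, ¬ IsPseudoLimitWith v γ (n • s) x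

end PseudoCauchy

/-- Arbitrary when `f` is not eventually constant. -/
noncomputable def eventualValue {ι β : Type*} [Preorder ι] [Nonempty β] (f : ι → β) : β :=
  Classical.epsilon fun c => ∀ᶠ i in atTop, f i = c

theorem eventualValue_eq {ι β : Type*} [LinearOrder ι] [Nonempty ι] [Nonempty β] {f : ι → β}
    {c : β} (h : ∀ᶠ i in atTop, f i = c) : eventualValue f = c := by
  obtain ⟨i, h₁, h₂⟩ := ((Classical.epsilon_spec (p := fun c => ∀ᶠ i in atTop, f i = c)
    ⟨c, h⟩).and h).exists
  exact h₁.symm.trans h₂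

/-- `G` with an element `t` adjoined subject to `d • t = z₀`: `(x, n)` stands for `x + n • t`. -/
abbrev AdjoinNSMulRoot {G : Type*} [AddCommGroup G] (z₀ : G) (d : ℕ) :=
  (G × ℤ) ⧸ AddSubgroup.zmultiples ((-z₀, (d : ℤ)) : G × ℤ)

namespace AdjoinNSMulRoot

section Algebra

variable {G ι : Type*} [AddCommGroup G] (s : ι → G) (z₀ : G) (d : ℕ)

def of : G →+ AdjoinNSMulRoot z₀ d := (QuotientAddGroup.mk' _).comp (AddMonoidHom.inl G ℤ)

theorem mem_zmultiples_iff [NeZero d] (p : G × ℤ) :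
    p ∈ AddSubgroup.zmultiples ((-z₀, (d : ℤ)) : G × ℤ) ↔
      (d : ℤ) ∣ p.2 ∧ p.1 + (p.2 / d) • z₀ = 0 := by
  have hd : (d : ℤ) ≠ 0 := by exact_mod_cast NeZero.ne d
  rw [AddSubgroup.mem_zmultiples_iff]
  constructor
  · rintro ⟨k, rfl⟩
    simp [Int.mul_ediv_cancel _ hd]
  · rintro ⟨⟨k, hk⟩, h⟩
    refine ⟨k, Prod.ext ?_ ?_⟩
    · simp only [hk, Int.mul_ediv_cancel_left _ hd] at h
      simp [eq_neg_of_add_eq_zero_left h]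
    · simp [hk, mul_comm]

theorem of_injective [NeZero d] : Function.Injective (of z₀ d) := by
  refine (injective_iff_map_eq_zero _).2 fun x hx => ?_
  simpa [of, mem_zmultiples_iff] using hx

theorem of_not_surjective [NeZero d] (hd : d ≠ 1) : ¬ Function.Surjective (of z₀ d) := by
  rintro hsurj
  obtain ⟨x, hx⟩ := hsurj (QuotientAddGroup.mk (0, 1))
  have hdvd : (d : ℤ) ∣ 1 := by
    simpa [of] using ((mem_zmultiples_iff z₀ d _).1 (QuotientAddGroup.eq.1 hx)).1
  exact hd (Nat.dvd_one.1 (by exact_mod_cast hdvd))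

/-- The image of `x + n • t` in `G` when `t` is replaced by `s i`, corrected by a multiple of
`d • s i - z₀` so that it only depends on the class of `(x, n)`. -/
def approx (p : G × ℤ) (i : ι) : G := p.1 + p.2 • s i - (p.2 / d) • (d • s i - z₀)

theorem approx_add_zsmul [NeZero d] (p : G × ℤ) (k : ℤ) (i : ι) :
    approx s z₀ d (p + k • ((-z₀, (d : ℤ)) : G × ℤ)) i = approx s z₀ d p i := by
  simp only [approx, Prod.fst_add, Prod.snd_add, Prod.smul_fst, Prod.smul_snd, smul_eq_mul]
  rw [Int.add_mul_ediv_right _ _ (by exact_mod_cast NeZero.ne d)]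
  module

theorem approx_eq_emod (p : G × ℤ) (i : ι) :
    approx s z₀ d p i = p.1 + (p.2 / d) • z₀ + (p.2 % d) • s i := by
  rw [approx, Int.emod_def]
  module

theorem approx_of_dvd {p : G × ℤ} (hp : (d : ℤ) ∣ p.2) (i : ι) :
    approx s z₀ d p i = p.1 + (p.2 / d) • z₀ := by
  rw [approx_eq_emod, Int.emod_eq_zero_of_dvd hp, zero_smul, add_zero]

theorem approx_inl (x : G) (i : ι) : approx s z₀ d (x, 0) i = x := by
  simp [approx]

theorem approx_sub_inl (p : G × ℤ) (x : G) (i : ι) :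
    approx s z₀ d (p - (x, 0)) i = approx s z₀ d p i - x := by
  simp only [approx, Prod.fst_sub, Prod.snd_sub, sub_zero]
  abel

theorem approx_sub_approx (p : G × ℤ) (i j : ι) :
    approx s z₀ d p j - approx s z₀ d p i = (p.2 % d) • (s j - s i) := by
  rw [approx_eq_emod, approx_eq_emod]
  module

theorem approx_sub (p q : G × ℤ) (i : ι) :
    approx s z₀ d (p - q) i = approx s z₀ d p i - approx s z₀ d q i -
      ((p.2 - q.2) / d - p.2 / d + q.2 / d) • (d • s i - z₀) := by
  simp only [approx, Prod.fst_sub, Prod.snd_sub]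
  module

theorem mk_sub_of (p : G × ℤ) (x : G) :
    (QuotientAddGroup.mk p : AdjoinNSMulRoot z₀ d) - of z₀ d x = QuotientAddGroup.mk (p - (x, 0)) :=
  rfl

end Algebra

section Valuation

variable {G Γ ι : Type*} [AddCommGroup G] [LinearOrder Γ] [OrderTop Γ] [LinearOrder ι]

noncomputable def pairVal (v : G → Γ) (s : ι → G) (z₀ : G) (d : ℕ) (p : G × ℤ) : Γ :=
  eventualValue fun i => v (approx s z₀ d p i)

noncomputable def val (v : G → Γ) (s : ι → G) (z₀ : G) (d : ℕ) [NeZero d] :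
    AdjoinNSMulRoot z₀ d → Γ :=
  Quotient.lift (pairVal v s z₀ d) fun p q hpq => by
    obtain ⟨k, hk⟩ := AddSubgroup.mem_zmultiples_iff.1 (QuotientAddGroup.leftRel_apply.1 hpq)
    rw [show q = p + k • ((-z₀, (d : ℤ)) : G × ℤ) by rw [hk]; abel]
    simp only [pairVal, approx_add_zsmul]

variable {v : G → Γ} {γ : ι → Γ} {s : ι → G} {z₀ : G} {d : ℕ} [NeZero d]

theorem val_mk (p : G × ℤ) : val v s z₀ d (QuotientAddGroup.mk p) = pairVal v s z₀ d p := rfl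

variable [Nonempty ι]

theorem val_of (x : G) : val v s z₀ d (of z₀ d x) = v x :=
  eventualValue_eq (.of_forall fun i => congrArg v (approx_inl s z₀ d x i))

variable (hv : IsValuedGroup v) (hinv : IsZInvariant v) (hs : IsPseudoCauchyWith v γ s)
  (hd : IsLeastPseudoLimitMultiple v γ s z₀ d)
include hv hinv hs hd

theorem eventually_pairVal (p : G × ℤ) :
    ∀ᶠ i in atTop, v (approx s z₀ d p i) = pairVal v s z₀ d p ∧
      (¬ (d : ℤ) ∣ p.2 → pairVal v s z₀ d p < γ i) := by
  by_cases hdvd : (d : ℤ) ∣ p.2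
  · have hval : pairVal v s z₀ d p = v (p.1 + (p.2 / d) • z₀) :=
      eventualValue_eq (.of_forall fun i => by rw [approx_of_dvd _ _ _ hdvd])
    exact .of_forall fun i => ⟨by rw [approx_of_dvd _ _ _ hdvd, hval], absurd hdvd⟩
  have hd0 : (0 : ℤ) < d := by exact_mod_cast Nat.pos_of_ne_zero (NeZero.ne d)
  set r := p.2 % d
  have hr : 0 < r := lt_of_le_of_ne (Int.emod_nonneg _ hd0.ne')
    fun h => hdvd (Int.dvd_of_emod_eq_zero h.symm)
  have hrd : r < d := Int.emod_lt_of_pos _ hd0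
  have hnot : ¬ IsPseudoLimitWith v γ (r • s) (-(p.1 + (p.2 / d) • z₀)) := by
    rw [← Int.toNat_of_nonneg hr.le, natCast_zsmul]
    exact hd.not_isPseudoLimitWith _ (by omega) (by omega) _
  obtain ⟨c, hc⟩ := (hs.zsmul hv hinv hr.ne').exists_eventually_map_sub_eq hv hnot
  have happrox : ∀ i, approx s z₀ d p i = (r • s) i - -(p.1 + (p.2 / d) • z₀) := fun i => by
    rw [approx_eq_emod, Pi.smul_apply, sub_neg_eq_add, add_comm]
  have hval : pairVal v s z₀ d p = c :=
    eventualValue_eq (hc.mono fun i hi => by rw [happrox]; exact hi.1)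
  filter_upwards [hc] with i hi
  rw [hval, happrox]
  exact ⟨hi.1, fun _ => hi.2⟩

theorem pairVal_eq_top_iff (p : G × ℤ) :
    pairVal v s z₀ d p = ⊤ ↔ p ∈ AddSubgroup.zmultiples ((-z₀, (d : ℤ)) : G × ℤ) := by
  rw [mem_zmultiples_iff]
  obtain ⟨i, hval, hlt⟩ := (eventually_pairVal hv hinv hs hd p).exists
  by_cases hdvd : (d : ℤ) ∣ p.2
  · rw [← hval, approx_of_dvd _ _ _ hdvd, hv.eq_top_iff]
    simp [hdvd]
  · simpa [hdvd] using (hlt hdvd).ne_top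

theorem min_pairVal_le_pairVal_sub (p q : G × ℤ) :
    min (pairVal v s z₀ d p) (pairVal v s z₀ d q) ≤ pairVal v s z₀ d (p - q) := by
  obtain ⟨i, ⟨hp, -⟩, ⟨hq, -⟩, hpq, hlt⟩ := ((eventually_pairVal hv hinv hs hd p).and
    ((eventually_pairVal hv hinv hs hd q).and (eventually_pairVal hv hinv hs hd (p - q)))).exists
  have hdiff : min (pairVal v s z₀ d p) (pairVal v s z₀ d q) ≤
      v (approx s z₀ d p i - approx s z₀ d q i) := hp ▸ hq ▸ hv.min_le_sub _ _
  rw [← hpq, approx_sub]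
  set e : ℤ := (p.2 - q.2) / d - p.2 / d + q.2 / d
  by_cases hdvd : (d : ℤ) ∣ (p - q).2
  · have he : e = 0 := by
      have : p.2 / d = (p.2 - q.2) / d + q.2 / d := by
        rw [← Int.add_ediv_of_dvd_left (by simpa using hdvd), sub_add_cancel]
      simp only [e, this]
      ring
    rwa [he, zero_smul, sub_zero]
  -- the correction term has value `≥ γ i`, while the left-hand side has value `< γ i`
  have hcarry : γ i ≤ v (e • (d • s i - z₀)) :=
    (hd.isPseudoLimitWith i).trans (hinv.le_map_zsmul hv _ _)
  have hsmall : v (approx s z₀ d p i - approx s z₀ d q i - e • (d • s i - z₀)) < γ i := by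
    rw [← approx_sub, hpq]
    exact hlt hdvd
  rcases min_le_iff.1 (hv.min_le_sub (approx s z₀ d p i - approx s z₀ d q i)
    (e • (d • s i - z₀))) with h | h
  · exact hdiff.trans h
  · exact absurd (h.trans_lt hsmall) hcarry.not_gt

theorem isValuedGroup_val : IsValuedGroup (val v s z₀ d) where
  surjective c := let ⟨x, hx⟩ := hv.surjective c; ⟨of z₀ d x, by rw [val_of, hx]⟩
  eq_top_iff x := QuotientAddGroup.induction_on x fun p => by
    rw [val_mk, pairVal_eq_top_iff hv hinv hs hd, QuotientAddGroup.eq_zero_iff]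
  min_le_sub x y := QuotientAddGroup.induction_on x fun p => QuotientAddGroup.induction_on y
    fun q => by
      rw [← QuotientAddGroup.mk_sub, val_mk, val_mk, val_mk]
      exact min_pairVal_le_pairVal_sub hv hinv hs hd p q

theorem eventually_pairVal_lt_pairVal_sub_approx [NoMaxOrder ι] {p : G × ℤ}
    (hp : pairVal v s z₀ d p ≠ ⊤) :
    ∀ᶠ i in atTop, pairVal v s z₀ d p < pairVal v s z₀ d (p - (approx s z₀ d p i, 0)) := by
  by_cases hdvd : (d : ℤ) ∣ p.2
  · refine .of_forall fun i => ?_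
    have hmem : p - (approx s z₀ d p i, 0) ∈ AddSubgroup.zmultiples ((-z₀, (d : ℤ)) : G × ℤ) :=
      (mem_zmultiples_iff _ _ _).2 ⟨by simpa using hdvd, by simp [approx_of_dvd _ _ _ hdvd]⟩
    rw [(pairVal_eq_top_iff hv hinv hs hd _).2 hmem]
    exact lt_top_iff_ne_top.2 hp
  have hr : p.2 % d ≠ 0 := fun h => hdvd (Int.dvd_of_emod_eq_zero h)
  filter_upwards [eventually_pairVal hv hinv hs hd p] with i hi
  suffices pairVal v s z₀ d (p - (approx s z₀ d p i, 0)) = γ i by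
    rw [this]
    exact hi.2 hdvd
  refine eventualValue_eq ((eventually_gt_atTop i).mono fun j hij => ?_)
  rw [approx_sub_inl, approx_sub_approx, hinv.map_zsmul hv hr, hv.map_sub_comm, hs.map_sub i j hij]

theorem isImmediateIn_val [NoMaxOrder ι] :
    IsImmediateIn (val v s z₀ d) (Set.range (of z₀ d)) Set.univ := by
  have hw := isValuedGroup_val hv hinv hs hd
  refine ⟨fun k _ hk => ?_, fun c ⟨g₀, _, hg₀, hc⟩ k _ hk => ?_⟩
  · induction k using QuotientAddGroup.induction_on with | H p => ?_
    have hp : pairVal v s z₀ d p ≠ ⊤ := by rwa [← val_mk, Ne, hw.eq_top_iff]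
    obtain ⟨i, hi, -⟩ := (eventually_pairVal hv hinv hs hd p).exists
    have hval : val v s z₀ d (of z₀ d (approx s z₀ d p i)) = pairVal v s z₀ d p := by
      rw [val_of, hi]
    exact ⟨_, ⟨_, rfl⟩, fun h0 => hp (by rw [← hval, h0, hw.map_zero]), hval⟩
  have hctop : c < ⊤ := hc ▸ lt_top_iff_ne_top.2 fun h => hg₀ ((hw.eq_top_iff g₀).1 h)
  induction k using QuotientAddGroup.induction_on with | H p => ?_
  by_cases hp : pairVal v s z₀ d p = ⊤
  · refine ⟨0, ⟨0, map_zero _⟩, by rw [hw.map_zero]; exact le_top, ?_⟩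
    rwa [sub_zero, val_mk, hp]
  obtain ⟨i, ⟨hi, -⟩, hlt⟩ := ((eventually_pairVal hv hinv hs hd p).and
    (eventually_pairVal_lt_pairVal_sub_approx hv hinv hs hd hp)).exists
  refine ⟨of z₀ d (approx s z₀ d p i), ⟨_, rfl⟩, by rwa [val_of, hi, ← val_mk], ?_⟩
  rw [mk_sub_of, val_mk]
  exact hk.trans_lt hlt

end Valuation

end AdjoinNSMulRoot

section Maximal

variable {G Γ : Type u} [AddCommGroup G] [LinearOrder Γ] [OrderTop Γ] {v : G → Γ}

theorem IsMaximal.exists_isPseudoLimitWith (hmax : IsMaximal v) (hv : IsValuedGroup v)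
    (hinv : IsZInvariant v) {ι : Type*} [LinearOrder ι] [Nonempty ι] [NoMaxOrder ι]
    {γ : ι → Γ} {s : ι → G} (hs : IsPseudoCauchyWith v γ s) {n : ℕ} (hn : 0 < n) {x : G}
    (hx : IsPseudoLimitWith v γ (n • s) x) : ∃ z, IsPseudoLimitWith v γ s z := by
  classical
  have hex : ∃ d, 0 < d ∧ ∃ z, IsPseudoLimitWith v γ (d • s) z := ⟨n, hn, x, hx⟩
  obtain ⟨hd0, z₀, hz₀⟩ := Nat.find_spec hex
  have hd : IsLeastPseudoLimitMultiple v γ s z₀ (Nat.find hex) :=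
    ⟨hz₀, fun k hk hkd y hy => Nat.find_min hex hkd ⟨hk, y, hy⟩⟩
  have : NeZero (Nat.find hex) := ⟨hd0.ne'⟩
  have hd1 : Nat.find hex = 1 := by
    by_contra hd1
    refine AdjoinNSMulRoot.of_not_surjective z₀ _ hd1 (hmax _ _ _
      (AdjoinNSMulRoot.isValuedGroup_val hv hinv hs hd) _ (AdjoinNSMulRoot.of_injective z₀ _)
      (fun _ => AdjoinNSMulRoot.val_of _) (AdjoinNSMulRoot.isImmediateIn_val hv hinv hs hd))
  exact ⟨z₀, by simpa [hd1] using hz₀⟩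

theorem IsMaximal.exists_isGreatest_sub_nsmul (hmax : IsMaximal v) (hv : IsValuedGroup v)
    (hinv : IsZInvariant v) (g : G) (m : ℕ) :
    ∃ δ : Γ, IsGreatest {δ' : Γ | ∃ g' : G, v (g - m • g') = δ'} δ := by
  by_contra! hno
  set Δ := {δ' : Γ | ∃ g' : G, v (g - m • g') = δ'}
  have hcof : ∀ δ ∈ Δ, ∃ ε ∈ Δ, δ < ε := fun δ hδ => by
    simpa [IsGreatest, upperBounds, hδ] using hno δ
  have hm : m ≠ 0 := by
    rintro rfl
    obtain ⟨ε, ⟨g', rfl⟩, hlt⟩ := hcof (v g) ⟨0, by simp⟩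
    simp at hlt
  have : Nonempty Δ := ⟨⟨v g, 0, by simp⟩⟩
  have : NoMaxOrder Δ := ⟨fun δ => let ⟨ε, hε, hlt⟩ := hcof δ δ.2; ⟨⟨ε, hε⟩, hlt⟩⟩
  choose s hs using fun δ : Δ => δ.2
  have hpc : IsPseudoCauchyWith v Subtype.val s := by
    refine ⟨Subtype.strictMono_coe _, fun δ ε hδε => ?_⟩
    have hsub : m • (s ε - s δ) = (g - m • s δ) - (g - m • s ε) := by
      rw [smul_sub]
      abel
    rw [hv.map_sub_comm, ← hinv _ m (Nat.pos_of_ne_zero hm), hsub,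
      hv.map_sub_eq_of_lt (by rw [hs, hs]; exact hδε), hs]
  have hlim : IsPseudoLimitWith v Subtype.val (m • s) g := fun δ => by
    rw [Pi.smul_apply, hv.map_sub_comm, hs]
  obtain ⟨z, hz⟩ := hmax.exists_isPseudoLimitWith hv hinv hpc (Nat.pos_of_ne_zero hm) hlim
  -- `v (g - m • z)` lies in `Δ` and is at least every `ε ∈ Δ`
  obtain ⟨ε, hε, hlt⟩ := hcof (v (g - m • z)) ⟨z, rfl⟩
  have hle : ε ≤ v (g - m • z) := by
    have hsum : g - m • z = (g - m • s ⟨ε, hε⟩) + m • (s ⟨ε, hε⟩ - z) := by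
      rw [smul_sub]
      abel
    have := hv.min_le_map_add (g - m • s ⟨ε, hε⟩) (m • (s ⟨ε, hε⟩ - z))
    rw [← hsum, hs, hinv _ m (Nat.pos_of_ne_zero hm)] at this
    exact le_min le_rfl (hz _) |>.trans this
  exact hlt.not_ge hle

end Maximal

theorem isPseudoCompleteIn_of_forall_exists_forall_le {G Γ : Type u} [AddCommGroup G]
    [LinearOrder Γ] [OrderTop Γ] {v : G → Γ} (hv : IsValuedGroup v) {S : Set G}
    (hS : ∀ x, ∃ y ∈ S, ∀ z ∈ S, v (x - z) ≤ v (x - y)) : IsPseudoCompleteIn v S Set.univ := by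
  rintro I _ _ _ _ a ha ⟨i₀, hc⟩ ⟨x, -, i₁, hx⟩
  obtain ⟨y, hyS, hy⟩ := hS x
  refine ⟨y, hyS, max i₀ i₁, fun i j hi hij => ?_⟩
  obtain ⟨j', hij'⟩ := exists_gt i
  obtain ⟨k', hjk'⟩ := exists_gt j'
  have hi₀ : i₀ ≤ i := le_of_max_le_left hi
  have hi₁ : i₁ ≤ i := le_of_max_le_right hi
  have hlt : v (a i - x) < v (x - y) := calc
    v (a i - x) = v (a i - a j') := hx i j' hi₁ hij'
    _ < v (a j' - a k') := hc i j' k' hi₀ hij' hjk'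
    _ = v (a j' - x) := (hx j' k' (hi₁.trans hij'.le) hjk').symm
    _ = v (x - a j') := hv.map_sub_comm _ _
    _ ≤ v (x - y) := hy _ (ha j')
  rw [show a i - y = (a i - x) + (x - y) by abel, hv.map_add_eq_of_lt hlt, hx i j hi₁ hij]

/-- Let `G` be a ℤ-invariant valued abelian group which is maximal. Then for
every `g ∈ G` and every `m ∈ ℕ` the set `Δ_m(g) = {v (g - m • g') : g' ∈ G}` admits a
maximum; equivalently, the extension `G/mG` of valued abelian groups is pseudo-complete. -/
theorem delta_max_of_maximal {G Γ : Type u} [AddCommGroup G] [LinearOrder Γ] [OrderTop Γ]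
    (v : G → Γ) (hv : IsValuedGroup v)
    (hinv : ∀ (g : G) (n : ℕ), 0 < n → v (n • g) = v g)
    (hmax : IsMaximal v) :
    ∀ (g : G) (m : ℕ),
      (∃ δ : Γ, IsGreatest {δ' : Γ | ∃ g' : G, v (g - m • g') = δ'} δ) ∧
      IsPseudoCompleteIn v {x : G | ∃ y : G, x = m • y} Set.univ := by
  intro g m
  refine ⟨hmax.exists_isGreatest_sub_nsmul hv hinv g m,
    isPseudoCompleteIn_of_forall_exists_forall_le hv fun x => ?_⟩
  obtain ⟨_, ⟨y, rfl⟩, hy⟩ := hmax.exists_isGreatest_sub_nsmul hv hinv x m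
  exact ⟨m • y, ⟨y, rfl⟩, by rintro _ ⟨z, rfl⟩; exact hy ⟨z, rfl⟩⟩
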